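/- A matrix A with B(H) entries is a left Schur multiplier on B(ℓ²(H)) if and only if A * B ∈ 𝒞(ℓ²(H)) for every B ∈ 𝒞(ℓ²(H)); moreover the multiplier norm of A as a map on B(ℓ²(H)) equals its norm as a multiplier from 𝒞(ℓ²(H)) to 𝒞(ℓ²(H)). The analogous statement holds for right Schur multipliers. -/

import Mathlib

noncomputable section

/-- The Hilbert space `ℓ²(H)` of square-summable `H`-valued sequences. -/
abbrev ellTwo (H : Type) [NormedAddCommGroup H] [InnerProductSpace ℂ H] : Type :=
  lp (fun _ : ℕ => H) 2

variable {H : Type} [NormedAddCommGroup H] [InnerProductSpace ℂ H] [CompleteSpace H]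
  [TopologicalSpace.SeparableSpace H]

/-- A bounded operator `A` on `ℓ²(H)` is represented by the matrix `T = (T_{kj})`
(with `T k j ∈ B(H)`) if `(A (x e_j))_k = T_{kj} x` for all `j, k, x`. -/
def Represents (T : ℕ → ℕ → (H →L[ℂ] H))
    (A : ellTwo H →L[ℂ] ellTwo H) : Prop :=
  ∀ (j : ℕ) (x : H) (k : ℕ), A (lp.single 2 j x) k = T k j x

/-- A "polynomial" matrix: finitely many nonzero diagonals and uniformly bounded entries. -/
def PolyMat (T : ℕ → ℕ → (H →L[ℂ] H)) : Prop :=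
  (∃ N : ℕ, ∀ k j : ℕ, (N : ℤ) < |(j : ℤ) - (k : ℤ)| → T k j = 0) ∧
  (∃ M : ℝ, ∀ k j : ℕ, ‖T k j‖ ≤ M)

/-- The class `𝒞(ℓ²(H))`: the closure in `B(ℓ²(H))` of the operators represented by
polynomial matrices. -/
def ContinuousClass (A : ellTwo H →L[ℂ] ellTwo H) : Prop :=
  A ∈ closure {B : ellTwo H →L[ℂ] ellTwo H | ∃ T, PolyMat T ∧ Represents T B}

/-- `C` is a bound for `T` as a right Schur multiplier: for every bounded `B = (S_{kj})`,
the Schur product `B * A = (S_{kj} ∘ T_{kj})` is bounded with norm at most `C ‖B‖`. -/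
def IsRightMultBound (T : ℕ → ℕ → (H →L[ℂ] H)) (C : ℝ) : Prop :=
  ∀ (S : ℕ → ℕ → (H →L[ℂ] H)) (B : ellTwo H →L[ℂ] ellTwo H), Represents S B →
    ∃ AB : ellTwo H →L[ℂ] ellTwo H,
      Represents (fun k j => (S k j).comp (T k j)) AB ∧ ‖AB‖ ≤ C * ‖B‖

/-- `C` is a bound for `T` as a left Schur multiplier: for every bounded `B = (S_{kj})`,
the Schur product `A * B = (T_{kj} ∘ S_{kj})` is bounded with norm at most `C ‖B‖`. -/
def IsLeftMultBound (T : ℕ → ℕ → (H →L[ℂ] H)) (C : ℝ) : Prop :=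
  ∀ (S : ℕ → ℕ → (H →L[ℂ] H)) (B : ellTwo H →L[ℂ] ellTwo H), Represents S B →
    ∃ AB : ellTwo H →L[ℂ] ellTwo H,
      Represents (fun k j => (T k j).comp (S k j)) AB ∧ ‖AB‖ ≤ C * ‖B‖

/-- The right Schur-multiplier norm `‖T‖_{M_r(ℓ²(H))}`. -/
def rightMultNorm (T : ℕ → ℕ → (H →L[ℂ] H)) : ℝ :=
  sInf {C : ℝ | 0 ≤ C ∧ IsRightMultBound T C}

/-- The left Schur-multiplier norm `‖T‖_{M_l(ℓ²(H))}`. -/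
def leftMultNorm (T : ℕ → ℕ → (H →L[ℂ] H)) : ℝ :=
  sInf {C : ℝ | 0 ≤ C ∧ IsLeftMultBound T C}

/-- `C` is a bound for `T` as a left Schur multiplier from `𝒞(ℓ²(H))` to `𝒞(ℓ²(H))`. -/
def IsLeftCCBound (T : ℕ → ℕ → (H →L[ℂ] H)) (C : ℝ) : Prop :=
  ∀ (S : ℕ → ℕ → (H →L[ℂ] H)) (B : ellTwo H →L[ℂ] ellTwo H), Represents S B →
    ContinuousClass B →
    ∃ AB : ellTwo H →L[ℂ] ellTwo H,
      Represents (fun k j => (T k j).comp (S k j)) AB ∧ ContinuousClass AB ∧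
      ‖AB‖ ≤ C * ‖B‖

/-- `C` is a bound for `T` as a right Schur multiplier from `𝒞(ℓ²(H))` to `𝒞(ℓ²(H))`. -/
def IsRightCCBound (T : ℕ → ℕ → (H →L[ℂ] H)) (C : ℝ) : Prop :=
  ∀ (S : ℕ → ℕ → (H →L[ℂ] H)) (B : ellTwo H →L[ℂ] ellTwo H), Represents S B →
    ContinuousClass B →
    ∃ AB : ellTwo H →L[ℂ] ellTwo H,
      Represents (fun k j => (S k j).comp (T k j)) AB ∧ ContinuousClass AB ∧
      ‖AB‖ ≤ C * ‖B‖

/-!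
A Schur multiplier `Φ` on `B(ℓ²(H))` with bound `C` is `C`-Lipschitz, by uniqueness of the
operator with a given matrix, and it maps banded matrices with bounded entries to banded matrices
with bounded entries, since `Φ` fixes `0` and the entries of an operator are bounded by its norm.
Hence it maps `𝒞(ℓ²(H))` into its closure, which is `𝒞(ℓ²(H))`.

Conversely, let `Φ` multiply `𝒞(ℓ²(H))` with bound `C`, and let `B` be bounded. The corners
`P_m B P_m` are banded, so the operators `A_m` with matrices `Φ(P_m B P_m) = P_m Φ(B) P_m` exist
and have norm at most `C ‖B‖`. As `m → ∞`, the vectors `A_m (∑_{j ∈ F} x_j e_j)` converge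
coordinatewise, and the `ℓ²` norm is lower semicontinuous for coordinatewise convergence. So the
columns of `Φ(B)` lie in `ℓ²(H)` and satisfy `‖∑_{j ∈ F} Φ(B)(x_j e_j)‖ ≤ C ‖∑_{j ∈ F} x_j e_j‖`.
This makes `x ↦ ∑_j Φ(B)(x_j e_j)` converge, and the limit is an operator with matrix `Φ(B)` and
norm at most `C ‖B‖`.

Left and right Schur multiplication by `T` are the cases `Φ k j = mulLeft (T k j)` and
`Φ k j = mulRight (T k j)`.
-/

open Filter Topology

theorem summable_of_norm_sum_le {ι E F : Type*} [SeminormedAddCommGroup E]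
    [NormedAddCommGroup F] [CompleteSpace F] {f : ι → F} {g : ι → E} (hg : Summable g) (K : ℝ)
    (h : ∀ s : Finset ι, ‖∑ i ∈ s, f i‖ ≤ K * ‖∑ i ∈ s, g i‖) : Summable f := by
  refine summable_iff_vanishing_norm.2 fun ε hε => ?_
  have hK : 0 < |K| + 1 := by positivity
  obtain ⟨s, hs⟩ := hg.vanishing (Metric.ball_mem_nhds 0 (div_pos hε hK))
  refine ⟨s, fun t ht => ?_⟩
  calc ‖∑ i ∈ t, f i‖ ≤ |K| * ‖∑ i ∈ t, g i‖ :=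
        (h t).trans (mul_le_mul_of_nonneg_right (le_abs_self K) (norm_nonneg _))
    _ ≤ |K| * (ε / (|K| + 1)) :=
        mul_le_mul_of_nonneg_left (mem_ball_zero_iff.1 (hs t ht)).le (abs_nonneg K)
    _ < ε := by
        rw [mul_div_assoc', div_lt_iff₀ hK]
        nlinarith [abs_nonneg K]

namespace lp

variable (𝕜 : Type*) {E : Type*} [NormedRing 𝕜] [NormedAddCommGroup E] [Module 𝕜 E]
  [IsBoundedSMul 𝕜 E] (p : ENNReal) [Fact (1 ≤ p)]

def truncation (m : ℕ) : lp (fun _ : ℕ => E) p →L[𝕜] lp (fun _ : ℕ => E) p :=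
  ∑ j ∈ Finset.range m,
    (singleContinuousLinearMap 𝕜 (fun _ => E) p j).comp (evalCLM 𝕜 (fun _ => E) p j)

variable {𝕜 p}

theorem truncation_apply (m : ℕ) (f : lp (fun _ : ℕ => E) p) (k : ℕ) :
    truncation 𝕜 p m f k = if k < m then f k else 0 := by
  rw [truncation, sum_apply, lp.coeFn_sum, Finset.sum_apply]
  simp [evalCLM, Pi.single_apply]

theorem norm_truncation_apply_le (m : ℕ) (f : lp (fun _ : ℕ => E) p) :
    ‖truncation 𝕜 p m f‖ ≤ ‖f‖ := by
  refine lp.norm_mono (zero_lt_one.trans_le Fact.out).ne' fun k => ?_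
  rw [truncation_apply]
  split_ifs <;> simp

theorem truncation_single (m j : ℕ) (x : E) :
    truncation 𝕜 p m (lp.single p j x) = if j < m then lp.single p j x else 0 := by
  ext k
  rw [truncation_apply]
  by_cases hk : k = j
  · subst hk; split_ifs <;> simp
  · split_ifs <;> simp [hk]

end lp

section Represents

variable {E : Type} [NormedAddCommGroup E] [InnerProductSpace ℂ E]
  {S S' : ℕ → ℕ → E →L[ℂ] E} {A A' : ellTwo E →L[ℂ] ellTwo E}

theorem Represents.unique (hA : Represents S A) (hA' : Represents S A') : A = A' := by
  ext1 f
  have hf := lp.hasSum_single ENNReal.ofNat_ne_top f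
  refine (A.hasSum hf).unique ?_
  convert A'.hasSum hf using 2 with j
  ext k
  rw [hA, hA']

theorem Represents.sub (hA : Represents S A) (hA' : Represents S' A') :
    Represents (fun k j => S k j - S' k j) (A - A') := by
  intro j x k
  simp [hA j x k, hA' j x k]

theorem Represents.norm_le (hA : Represents S A) (k j : ℕ) : ‖S k j‖ ≤ ‖A‖ := by
  refine ContinuousLinearMap.opNorm_le_bound _ A.opNorm_nonneg fun x => ?_
  calc ‖S k j x‖ = ‖A (lp.single 2 j x) k‖ := by rw [hA]
    _ ≤ ‖A (lp.single 2 j x)‖ := lp.norm_apply_le_norm two_ne_zero _ k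
    _ ≤ ‖A‖ * ‖x‖ := by
        simpa [lp.norm_single] using A.le_opNorm (lp.single 2 j x)

end Represents

def truncMatrix {X : Type*} [Zero X] (m : ℕ) (S : ℕ → ℕ → X) : ℕ → ℕ → X :=
  fun k j => if k < m ∧ j < m then S k j else 0

section Truncation

variable {E : Type} [NormedAddCommGroup E] [InnerProductSpace ℂ E]
  {S : ℕ → ℕ → E →L[ℂ] E} {B : ellTwo E →L[ℂ] ellTwo E}

theorem Represents.truncation (hB : Represents S B) (m : ℕ) :
    Represents (truncMatrix m S) ((lp.truncation ℂ 2 m).comp (B.comp (lp.truncation ℂ 2 m))) := by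
  intro j x k
  simp only [ContinuousLinearMap.comp_apply, lp.truncation_single, lp.truncation_apply,
    truncMatrix]
  by_cases hk : k < m <;> by_cases hj : j < m <;> simp [hk, hj, ← hB j x k]

theorem norm_truncation_comp_le (B : ellTwo E →L[ℂ] ellTwo E) (m : ℕ) :
    ‖(lp.truncation ℂ 2 m).comp (B.comp (lp.truncation ℂ 2 m))‖ ≤ ‖B‖ :=
  ContinuousLinearMap.opNorm_le_bound _ B.opNorm_nonneg fun x =>
    calc _ ≤ ‖B (lp.truncation ℂ 2 m x)‖ := lp.norm_truncation_apply_le _ _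
      _ ≤ ‖B‖ * ‖lp.truncation ℂ 2 m x‖ := B.le_opNorm _
      _ ≤ ‖B‖ * ‖x‖ := by gcongr; exact lp.norm_truncation_apply_le _ _

theorem Represents.polyMat_truncMatrix (hB : Represents S B) (m : ℕ) :
    PolyMat (truncMatrix m S) := by
  refine ⟨⟨m, fun k j hkj => if_neg fun hkm => ?_⟩, ⟨‖B‖, fun k j => ?_⟩⟩
  · rcases lt_abs.1 hkj with h | h <;> omega
  · unfold truncMatrix
    split_ifs
    · exact hB.norm_le k j
    · rw [norm_zero]
      exact B.opNorm_nonneg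

end Truncation

section LimitOfTruncations

variable {E : Type} [NormedAddCommGroup E] [InnerProductSpace ℂ E] {V : ℕ → ℕ → E →L[ℂ] E}
  {A : ℕ → ellTwo E →L[ℂ] ellTwo E} {K : ℝ}

theorem tendsto_apply_sum_single (hA : ∀ m, Represents (truncMatrix m V) (A m))
    (F : Finset ℕ) (x : ℕ → E) :
    Tendsto (fun m => (A m (∑ j ∈ F, lp.single 2 j (x j)) : ℕ → E)) atTop
      (𝓝 fun k => ∑ j ∈ F, V k j (x j)) := by
  refine tendsto_pi_nhds.2 fun k => tendsto_const_nhds.congr' ?_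
  filter_upwards [eventually_gt_atTop (max k (F.sup id))] with m hm
  rw [map_sum, lp.coeFn_sum, Finset.sum_apply]
  refine Finset.sum_congr rfl fun j hj => ?_
  have hjF : j ≤ F.sup id := Finset.le_sup (f := id) hj
  rw [hA m j (x j) k, truncMatrix, if_pos ⟨by omega, by omega⟩]

theorem memℓp_column (hA : ∀ m, Represents (truncMatrix m V) (A m)) (hK : ∀ m, ‖A m‖ ≤ K)
    (j : ℕ) (h : E) : Memℓp (fun k => V k j h) 2 := by
  have hlim := tendsto_apply_sum_single hA {j} (fun _ => h)
  simp only [Finset.sum_singleton] at hlim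
  refine lp.memℓp_of_tendsto (isBounded_iff_forall_norm_le.2 ⟨K * ‖h‖, ?_⟩) hlim
  rintro _ ⟨m, rfl⟩
  simpa [lp.norm_single] using (A m).le_of_opNorm_le (hK m) (lp.single 2 j h)

def column (hA : ∀ m, Represents (truncMatrix m V) (A m)) (hK : ∀ m, ‖A m‖ ≤ K) (j : ℕ) :
    E →ₗ[ℂ] ellTwo E where
  toFun h := ⟨fun k => V k j h, memℓp_column hA hK j h⟩
  map_add' h h' := lp.ext <| funext fun k => map_add (V k j) h h'
  map_smul' c h := lp.ext <| funext fun k => map_smul (V k j) c h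

theorem norm_sum_column_le (hA : ∀ m, Represents (truncMatrix m V) (A m))
    (hK : ∀ m, ‖A m‖ ≤ K) (F : Finset ℕ) (x : ℕ → E) :
    ‖∑ j ∈ F, column hA hK j (x j)‖ ≤ K * ‖∑ j ∈ F, lp.single 2 j (x j)‖ := by
  have hcoe : ((∑ j ∈ F, column hA hK j (x j) : ellTwo E) : ℕ → E) =
      fun k => ∑ j ∈ F, V k j (x j) := by
    funext k
    rw [lp.coeFn_sum, Finset.sum_apply]
    rfl
  have hlim := tendsto_apply_sum_single hA F x
  rw [← hcoe] at hlim
  exact lp.norm_le_of_tendsto (Eventually.of_forall fun m => (A m).le_of_opNorm_le (hK m) _) hlim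

theorem summable_column [CompleteSpace E] (hA : ∀ m, Represents (truncMatrix m V) (A m))
    (hK : ∀ m, ‖A m‖ ≤ K) (x : ellTwo E) :
    Summable fun j => column hA hK j (x j) :=
  summable_of_norm_sum_le (lp.hasSum_single ENNReal.ofNat_ne_top x).summable K
    (norm_sum_column_le hA hK · x)

theorem norm_tsum_column_le [CompleteSpace E] (hA : ∀ m, Represents (truncMatrix m V) (A m))
    (hK : ∀ m, ‖A m‖ ≤ K) (x : ellTwo E) :
    ‖∑' j, column hA hK j (x j)‖ ≤ K * ‖x‖ :=
  le_of_tendsto_of_tendsto' (summable_column hA hK x).hasSum.tendsto_sum_nat.norm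
    ((lp.hasSum_single ENNReal.ofNat_ne_top x).tendsto_sum_nat.norm.const_mul K)
    fun _ => norm_sum_column_le hA hK _ x

theorem exists_represents_of_represents_truncMatrix [CompleteSpace E]
    (hA : ∀ m, Represents (truncMatrix m V) (A m)) (hK : ∀ m, ‖A m‖ ≤ K) :
    ∃ W : ellTwo E →L[ℂ] ellTwo E, Represents V W ∧ ‖W‖ ≤ K := by
  let partialSum (n : ℕ) : ellTwo E →ₗ[ℂ] ellTwo E :=
    ∑ j ∈ Finset.range n, (column hA hK j).comp (lp.evalₗ (fun _ => E) 2 j)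
  have hlim : Tendsto (fun n x => partialSum n x) atTop
      (𝓝 fun x => ∑' j, column hA hK j (x j)) :=
    tendsto_pi_nhds.2 fun x => by
      simpa [partialSum] using (summable_column hA hK x).hasSum.tendsto_sum_nat
  refine ⟨(linearMapOfTendsto _ _ hlim).mkContinuous K (norm_tsum_column_le hA hK),
    fun j h k => ?_, LinearMap.mkContinuous_norm_le _ ((hK 0).trans' (A 0).opNorm_nonneg) _⟩
  change (∑' i, column hA hK i ((lp.single 2 j h : ellTwo E) i)) k = V k j h
  rw [tsum_eq_single j fun i hi => by rw [lp.single_apply_ne _ _ _ hi, map_zero],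
    lp.single_apply_self]
  rfl

end LimitOfTruncations

section SchurMultiplier

variable {E : Type} [NormedAddCommGroup E] [InnerProductSpace ℂ E]
  {Φ : ℕ → ℕ → (E →L[ℂ] E) →+ (E →L[ℂ] E)} {C : ℝ}

def IsSchurMultBound (Φ : ℕ → ℕ → (E →L[ℂ] E) →+ (E →L[ℂ] E)) (C : ℝ) : Prop :=
  ∀ (S : ℕ → ℕ → (E →L[ℂ] E)) (B : ellTwo E →L[ℂ] ellTwo E), Represents S B →
    ∃ AB : ellTwo E →L[ℂ] ellTwo E,
      Represents (fun k j => Φ k j (S k j)) AB ∧ ‖AB‖ ≤ C * ‖B‖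

def IsSchurCCBound (Φ : ℕ → ℕ → (E →L[ℂ] E) →+ (E →L[ℂ] E)) (C : ℝ) : Prop :=
  ∀ (S : ℕ → ℕ → (E →L[ℂ] E)) (B : ellTwo E →L[ℂ] ellTwo E), Represents S B →
    ContinuousClass B →
    ∃ AB : ellTwo E →L[ℂ] ellTwo E,
      Represents (fun k j => Φ k j (S k j)) AB ∧ ContinuousClass AB ∧ ‖AB‖ ≤ C * ‖B‖

theorem IsSchurMultBound.norm_sub_le (h : IsSchurMultBound Φ C)
    {S S' : ℕ → ℕ → E →L[ℂ] E} {B B' A A' : ellTwo E →L[ℂ] ellTwo E}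
    (hB : Represents S B) (hB' : Represents S' B')
    (hA : Represents (fun k j => Φ k j (S k j)) A)
    (hA' : Represents (fun k j => Φ k j (S' k j)) A') :
    ‖A - A'‖ ≤ C * ‖B - B'‖ := by
  obtain ⟨D, hD, hDn⟩ := h _ _ (hB.sub hB')
  have hAA' : Represents (fun k j => Φ k j (S k j - S' k j)) (A - A') := by
    simpa only [map_sub] using hA.sub hA'
  rwa [hD.unique hAA'] at hDn

theorem PolyMat.schur {T : ℕ → ℕ → E →L[ℂ] E} (hT : PolyMat T) {A : ellTwo E →L[ℂ] ellTwo E}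
    (hA : Represents (fun k j => Φ k j (T k j)) A) : PolyMat fun k j => Φ k j (T k j) := by
  obtain ⟨⟨N, hN⟩, -⟩ := hT
  exact ⟨⟨N, fun k j hkj => show Φ k j (T k j) = 0 by rw [hN k j hkj, map_zero]⟩,
    ⟨‖A‖, hA.norm_le⟩⟩

theorem IsSchurMultBound.isSchurCCBound (hC : 0 ≤ C) (h : IsSchurMultBound Φ C) :
    IsSchurCCBound Φ C := by
  intro S B hSB hB
  obtain ⟨A, hA, hAn⟩ := h S B hSB
  refine ⟨A, hA, (Metric.mem_closure_iff (α := ellTwo E →L[ℂ] ellTwo E)).2 fun ε hε => ?_, hAn⟩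
  obtain ⟨B', ⟨T', hT', hB'⟩, hBB'⟩ :=
    (Metric.mem_closure_iff (α := ellTwo E →L[ℂ] ellTwo E)).1 hB (ε / (C + 1)) (by positivity)
  obtain ⟨A', hA', -⟩ := h T' B' hB'
  refine ⟨A', ⟨_, hT'.schur hA', hA'⟩, ?_⟩
  calc dist A A' = ‖A - A'‖ := dist_eq_norm A A'
    _ ≤ C * ‖B - B'‖ := h.norm_sub_le hSB hB' hA hA'
    _ = C * dist B B' := congrArg (C * ·) (dist_eq_norm B B').symm
    _ ≤ C * (ε / (C + 1)) := by gcongr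
    _ < ε := by
        rw [mul_div_assoc', div_lt_iff₀ (by positivity)]
        nlinarith

theorem IsSchurCCBound.isSchurMultBound [CompleteSpace E] (hC : 0 ≤ C) (h : IsSchurCCBound Φ C) :
    IsSchurMultBound Φ C := by
  intro S B hSB
  choose A hA _ hAn using fun m =>
    h _ _ (hSB.truncation m) (subset_closure ⟨_, hSB.polyMat_truncMatrix m, hSB.truncation m⟩)
  have hA' : ∀ m, Represents (truncMatrix m fun k j => Φ k j (S k j)) (A m) := by
    intro m
    convert hA m using 1
    funext k j
    unfold truncMatrix
    split_ifs <;> simp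
  exact exists_represents_of_represents_truncMatrix hA'
    fun m => (hAn m).trans (by gcongr; exact norm_truncation_comp_le B m)

theorem isSchurMultBound_iff_isSchurCCBound [CompleteSpace E] (hC : 0 ≤ C) :
    IsSchurMultBound Φ C ↔ IsSchurCCBound Φ C :=
  ⟨IsSchurMultBound.isSchurCCBound hC, IsSchurCCBound.isSchurMultBound hC⟩

end SchurMultiplier

/-- a matrix is a left (resp. right) Schur multiplier on `B(ℓ²(H))` iff it
multiplies `𝒞(ℓ²(H))` into `𝒞(ℓ²(H))`, with equal multiplier norms. -/
theorem multiplier_iff_CC (T : ℕ → ℕ → (H →L[ℂ] H)) :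
    ((∃ C : ℝ, 0 ≤ C ∧ IsLeftMultBound T C) ↔ (∃ C : ℝ, 0 ≤ C ∧ IsLeftCCBound T C)) ∧
    sInf {C : ℝ | 0 ≤ C ∧ IsLeftMultBound T C} =
      sInf {C : ℝ | 0 ≤ C ∧ IsLeftCCBound T C} ∧
    ((∃ C : ℝ, 0 ≤ C ∧ IsRightMultBound T C) ↔ (∃ C : ℝ, 0 ≤ C ∧ IsRightCCBound T C)) ∧
    sInf {C : ℝ | 0 ≤ C ∧ IsRightMultBound T C} =
      sInf {C : ℝ | 0 ≤ C ∧ IsRightCCBound T C} := by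
  have hLeft (C : ℝ) : 0 ≤ C ∧ IsLeftMultBound T C ↔ 0 ≤ C ∧ IsLeftCCBound T C :=
    and_congr_right (isSchurMultBound_iff_isSchurCCBound
      (Φ := fun k j => AddMonoidHom.mulLeft (T k j)))
  have hRight (C : ℝ) : 0 ≤ C ∧ IsRightMultBound T C ↔ 0 ≤ C ∧ IsRightCCBound T C :=
    and_congr_right (isSchurMultBound_iff_isSchurCCBound
      (Φ := fun k j => AddMonoidHom.mulRight (T k j)))
  exact ⟨exists_congr hLeft, congrArg sInf (Set.ext hLeft),
    exists_congr hRight, congrArg sInf (Set.ext hRight)⟩
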